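/- arXiv:2108.06450 — 2 statements merged into one kernel-verified Lean document; each statement's English description precedes it below -/
import Mathlib

section
/- Fix integers d ≥ 1 and k ≥ 1. There exist constants 0 < c ≤ C such that for all integers n ≥ 2: c · r_{d,k}(n) ≤ n^{−d} Σ_{v ∈ Z_n^d ∖ {0}} λ_v^{−k} ≤ C · r_{d,k}(n), where r_{d,k}(n) := 1 if d > 2k, r_{d,k}(n) := log n if d = 2k, and r_{d,k}(n) := n^{2k−d} if d < 2k. -/
open scoped BigOperators Classical
open Filter

noncomputable section

namespace RWVacant

/-- The discrete torus `(ℤ/nℤ)^d`. -/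
abbrev Torus (d n : ℕ) : Type := Fin d → ZMod n

/-- The standard basis vectors of the torus. -/
def eT (d n : ℕ) (j : Fin d) : Torus d n := fun i => if i = j then 1 else 0

/-- The transition matrix of the 1/2-lazy simple random walk on the torus. -/
def P (d n : ℕ) : Torus d n → Torus d n → ℝ := fun x y =>
  if y = x then 1 / 2
  else if ∃ j : Fin d, y - x = eT d n j ∨ y - x = -eT d n j then 1 / (4 * (d : ℝ))
  else 0

/-- Entries of the `t`-th matrix power of `P`. -/
def Ppow (d n : ℕ) [NeZero n] : ℕ → Torus d n → Torus d n → ℝ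
  | 0 => fun x y => if x = y then 1 else 0
  | t + 1 => fun x y => ∑ w : Torus d n, Ppow d n t x w * P d n w y

/-- `g_n(ξ)`. -/
def g (d n : ℕ) [NeZero n] (ξ : Torus d n) : ℝ :=
  ∑' t : ℕ, (Ppow d n t 0 ξ - ((n : ℝ) ^ d)⁻¹)

/-- `g_n'(ξ)` (the `t = 0` term vanishes, so we may sum over all `t ≥ 0`). -/
def g' (d n : ℕ) [NeZero n] (ξ : Torus d n) : ℝ :=
  ∑' t : ℕ, (t : ℝ) * (Ppow d n t 0 ξ - ((n : ℝ) ^ d)⁻¹)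

/-- `f_n(ξ)`. -/
def f (d n : ℕ) [NeZero n] (ξ : Torus d n) : ℝ := (g d n 0 + g d n ξ) / 2

/-- `f_n'(ξ)`. -/
def f' (d n : ℕ) [NeZero n] (ξ : Torus d n) : ℝ := (g' d n 0 + g' d n ξ) / 2

/-- The killed transition matrix `Q_A`. -/
def QA (d n : ℕ) (A : Set (Torus d n)) : Torus d n → Torus d n → ℝ := fun x y =>
  if x ∈ A ∨ y ∈ A then 0 else P d n x y

/-- Entries of the `t`-th matrix power of `Q_A`. -/
def QApow (d n : ℕ) [NeZero n] (A : Set (Torus d n)) : ℕ → Torus d n → Torus d n → ℝ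
  | 0 => fun x y => if x = y then 1 else 0
  | t + 1 => fun x y => ∑ w : Torus d n, QApow d n A t x w * QA d n A w y

/-- `P_π(τ(A) > t)`. -/
def tailProb (d n : ℕ) [NeZero n] (A : Set (Torus d n)) (t : ℕ) : ℝ :=
  ((n : ℝ) ^ d)⁻¹ * ∑ x : Torus d n, ∑ y : Torus d n, QApow d n A t x y

/-- `P_π(τ(A) = s)`, with the convention `P_π(τ(A) > -1) = 1`. -/
def eqProb (d n : ℕ) [NeZero n] (A : Set (Torus d n)) : ℕ → ℝ
  | 0 => 1 - tailProb d n A 0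
  | s + 1 => tailProb d n A s - tailProb d n A (s + 1)

/-- The space of `ℓ`-tuples of paths with time horizon `t` in the torus. -/
abbrev PathSpace (d n ℓ t : ℕ) : Type := Fin ℓ → Fin (t + 1) → Torus d n

/-- The probability mass function of `ℓ` independent lazy walks started uniformly. -/
def pmf (d n ℓ t : ℕ) (x : PathSpace d n ℓ t) : ℝ :=
  ∏ i : Fin ℓ, (((n : ℝ) ^ d)⁻¹ * ∏ s : Fin t, P d n (x i s.castSucc) (x i s.succ))

/-- Expectation on the path space. -/
def expect (d n ℓ t : ℕ) [NeZero n] (F : PathSpace d n ℓ t → ℝ) : ℝ :=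
  ∑ x : PathSpace d n ℓ t, pmf d n ℓ t x * F x

/-- Variance on the path space. -/
def variance (d n ℓ t : ℕ) [NeZero n] (F : PathSpace d n ℓ t → ℝ) : ℝ :=
  expect d n ℓ t fun x => (F x - expect d n ℓ t F) ^ 2

/-- Covariance on the path space. -/
def covar (d n ℓ t : ℕ) [NeZero n] (F F' : PathSpace d n ℓ t → ℝ) : ℝ :=
  expect d n ℓ t fun x => (F x - expect d n ℓ t F) * (F' x - expect d n ℓ t F')

/-- The size `V_n^{(ℓ)}(t)` of the vacant set of a path configuration. -/
def Vfun (d n ℓ t : ℕ) [NeZero n] (x : PathSpace d n ℓ t) : ℝ :=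
  (Finset.univ.filter (fun v : Torus d n =>
    ∀ (i : Fin ℓ) (s : Fin (t + 1)), x i s ≠ v)).card

/-- `R^I_{n,ℓ}(t)` of a path configuration. -/
def Rfun (d n ℓ t : ℕ) [NeZero n] (I : Finset (Fin ℓ)) (x : PathSpace d n ℓ t) : ℝ :=
  (Finset.univ.filter (fun v : Torus d n =>
    (∀ i ∈ I, ∃ s : Fin (t + 1), x i s = v) ∧
      (∀ i : Fin ℓ, i ∉ I → ∀ s : Fin (t + 1), x i s ≠ v))).card

/-- Variance of the vacant-set size, with junk value `0` at `n = 0`. -/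
def varV (d ℓ n t : ℕ) : ℝ :=
  if h : n = 0 then 0
  else
    haveI : NeZero n := ⟨h⟩
    variance d n ℓ t (Vfun d n ℓ t)

/-- Covariance of `R^I` and `R^J`, with junk value `0` at `n = 0`. -/
def covR (d ℓ : ℕ) (I J : Finset (Fin ℓ)) (n t : ℕ) : ℝ :=
  if h : n = 0 then 0
  else
    haveI : NeZero n := ⟨h⟩
    covar d n ℓ t (Rfun d n ℓ t I) (Rfun d n ℓ t J)

/-- `Σ_ξ g_n(ξ)²`, with junk value `0` at `n = 0`. -/
def sumGsq (d n : ℕ) : ℝ :=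
  if h : n = 0 then 0
  else
    haveI : NeZero n := ⟨h⟩
    ∑ ξ : Torus d n, g d n ξ ^ 2

/-- `Σ_ξ |g_n(ξ)|³`, with junk value `0` at `n = 0`. -/
def sumGcube (d n : ℕ) : ℝ :=
  if h : n = 0 then 0
  else
    haveI : NeZero n := ⟨h⟩
    ∑ ξ : Torus d n, |g d n ξ| ^ 3

/-- `g_n'(0)`, with junk value `0` at `n = 0`. -/
def gDeriv0 (d n : ℕ) : ℝ :=
  if h : n = 0 then 0
  else
    haveI : NeZero n := ⟨h⟩
    g' d n 0

/-- The eigenvalue `λ_v`. -/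
def lam (d n : ℕ) (v : Fin d → ZMod n) : ℝ :=
  (1 / (d : ℝ)) * ∑ j : Fin d, Real.sin (Real.pi * ((v j).val : ℝ) / (n : ℝ)) ^ 2

/-- The norm `‖v‖` on the torus. -/
def tnorm (d n : ℕ) (v : Torus d n) : ℝ :=
  Real.sqrt (∑ j : Fin d, ((min ((v j).val) (n - (v j).val) : ℕ) : ℝ) ^ 2)

/-- The lattice `ℤ^d`. -/
abbrev Lat (d : ℕ) : Type := Fin d → ℤ

/-- The standard basis vectors of the lattice. -/
def eZ (d : ℕ) (j : Fin d) : Lat d := fun i => if i = j then 1 else 0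

/-- The Euclidean norm on the lattice. -/
def znorm (d : ℕ) (v : Lat d) : ℝ := Real.sqrt (∑ j : Fin d, ((v j : ℝ)) ^ 2)

/-- The step distribution of the 1/2-lazy walk on `ℤ^d`. -/
def mu (d : ℕ) (v : Lat d) : ℝ :=
  if v = 0 then 1 / 2
  else if ∃ j : Fin d, v = eZ d j ∨ v = -eZ d j then 1 / (4 * (d : ℝ))
  else 0

/-- `p_t = μ^{*t}`, the `t`-fold convolution power of `μ`. -/
def ptZ (d : ℕ) : ℕ → Lat d → ℝ
  | 0 => fun v => if v = 0 then 1 else 0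
  | t + 1 => fun v => ∑' w : Lat d, ptZ d t w * mu d (v - w)

/-- The Green's function `G(ξ)` on `ℤ^d`. -/
def G (d : ℕ) (ξ : Lat d) : ℝ := ∑' t : ℕ, ptZ d t ξ

/-- `G'(ξ) = Σ_t t·p_t(ξ)`. -/
def G' (d : ℕ) (ξ : Lat d) : ℝ := ∑' t : ℕ, (t : ℝ) * ptZ d t ξ

/-- Summand of the series defining `ν_d` for `d ≥ 5`. -/
def nuTerm (d : ℕ) (w : ℝ) (ξ : Lat d) : ℝ :=
  Real.exp (w * G d ξ / (G d 0 + G d ξ)) - 1 - w * G d ξ / (G d 0 + G d ξ) +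
    w * G d ξ ^ 2 * (G d ξ - if ξ = 0 then 1 else 0) / (G d 0 ^ 2 * (G d 0 + G d ξ))

/-- `ν_d` for `d ≥ 5`. -/
def nuHigh (d : ℕ) (w : ℝ) : ℝ := Real.exp (-w) * ∑' ξ : Lat d, nuTerm d w ξ

/-- The scaling factor `h_d(n)`. -/
def hFun (d n : ℕ) : ℝ := if d = 3 then (n : ℝ) else if d = 4 then Real.log (n : ℝ) else 1

/-- `Σ_{v ∈ ℤ³∖{0}} ‖v‖⁻⁴`. -/
def sumZ3 : ℝ := ∑' v : Lat 3, if v = 0 then 0 else (znorm 3 v ^ 4)⁻¹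

/-- `(log n)⁻¹ Σ_{v ∈ ℤ⁴, 0 < ‖v‖ ≤ n} ‖v‖⁻⁴`. -/
def logAvgZ4 (n : ℕ) : ℝ :=
  (Real.log (n : ℝ))⁻¹ *
    ∑' v : Lat 4, if v ≠ 0 ∧ znorm 4 v ≤ (n : ℝ) then (znorm 4 v ^ 4)⁻¹ else 0

/-- The constant `α₃`. -/
def alpha3 : ℝ := 9 / (Real.pi ^ 4 * G 3 0 ^ 2) * sumZ3

/-- `ν_d(w) = (1/2) α_d w² e^{-w}` for `d ∈ {3,4}`. -/
def nuLow (αd w : ℝ) : ℝ := 1 / 2 * αd * w ^ 2 * Real.exp (-w)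

/-- `ν_d` for general `d ≥ 3`, where `a4` is the constant `α₄`. -/
def nuAll (d : ℕ) (a4 : ℝ) (w : ℝ) : ℝ :=
  if d = 3 then nuLow alpha3 w else if d = 4 then nuLow a4 w else nuHigh d w

/-- The coefficients `θ_{k,r,m}(a)`. -/
def theta (k r m : ℕ) (a : ℝ) : ℝ :=
  ∑ j ∈ Finset.Icc (m - k) (min r m),
    (Nat.choose k (m - j) : ℝ) * (Nat.choose r j : ℝ) * (1 - 2 * a) ^ (m - j) *
      (-1 : ℝ) ^ (r - j) * a ^ j

/-- The generating function `g_n(ξ; z)`. -/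
def gc (d n : ℕ) [NeZero n] (z : ℂ) (ξ : Torus d n) : ℂ :=
  ∑' t : ℕ, z ^ t * ((Ppow d n t 0 ξ - ((n : ℝ) ^ d)⁻¹ : ℝ) : ℂ)

/-- The generating function `f_n(ξ; z)`. -/
def fc (d n : ℕ) [NeZero n] (z : ℂ) (ξ : Torus d n) : ℂ := (gc d n z 0 + gc d n z ξ) / 2

end RWVacant

open RWVacant

/-!
Write `‖v‖` for the sup-norm of the representative of `v` in `(-n/2, n/2]^d`. Jordan's inequality
`2x/π ≤ sin x ≤ x` on `[0, π/2]` gives `4‖v‖²/(d n²) ≤ λ_v ≤ π²‖v‖²/n²`, and the sphere `‖v‖ = r`,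
`1 ≤ r ≤ n/2`, has between `r^{d-1}` and `2d·3^{d-1}·r^{d-1}` points. Hence
`n^{-d} Σ_{v ≠ 0} λ_v^{-k}` is comparable to `n^{2k-d} Σ_{r ≤ n/2} r^{d-1-2k}`, and the three
regimes are those of this power sum: at most `n^{d-2k}`, harmonic, or bounded by `ζ(2)`. For
`d > 2k` the lower bound is simply `λ_v ≤ 1`.
-/

open Finset Real

namespace ZMod

variable {n : ℕ} [NeZero n]

theorem sin_pi_mul_val_div_eq_sin_natAbs_valMinAbs (a : ZMod n) :
    sin (π * a.val / n) = sin (π * a.valMinAbs.natAbs / n) := by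
  have hn : (n : ℝ) ≠ 0 := Nat.cast_ne_zero.2 (NeZero.ne n)
  rw [valMinAbs_natAbs_eq_min]
  rcases le_total a.val (n - a.val) with h | h
  · rw [min_eq_left h]
  · rw [min_eq_right h, Nat.cast_sub a.val_le, ← sin_pi_sub]
    congr 1
    field_simp

theorem card_filter_natAbs_valMinAbs_le (r : ℕ) :
    #{a : ZMod n | a.valMinAbs.natAbs ≤ r} ≤ 2 * r + 1 := by
  calc #{a : ZMod n | a.valMinAbs.natAbs ≤ r}
      ≤ #(Icc (-r : ℤ) r) := by
        refine card_le_card_of_injOn valMinAbs (fun a ha => ?_) injective_valMinAbs.injOn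
        simp only [coe_filter, Set.mem_ofPred_eq, mem_univ, true_and] at ha
        simp only [coe_Icc, Set.mem_Icc]
        omega
    _ = 2 * r + 1 := by simp; omega

theorem card_filter_natAbs_valMinAbs_eq_le_two (r : ℕ) :
    #{a : ZMod n | a.valMinAbs.natAbs = r} ≤ 2 := by
  calc #{a : ZMod n | a.valMinAbs.natAbs = r}
      ≤ #({(r : ℤ), -(r : ℤ)} : Finset ℤ) := by
        refine card_le_card_of_injOn valMinAbs (fun a ha => ?_) injective_valMinAbs.injOn
        simp only [coe_filter, Set.mem_ofPred_eq, mem_univ, true_and] at ha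
        simp only [coe_insert, coe_singleton, Set.mem_insert_iff, Set.mem_singleton_iff]
        omega
    _ ≤ 2 := card_le_two

theorem le_card_filter_natAbs_valMinAbs_le {r : ℕ} (hr : r ≤ n / 2) :
    r + 1 ≤ #{a : ZMod n | a.valMinAbs.natAbs ≤ r} := by
  have hrn : r < n := hr.trans_lt (Nat.div_lt_self (Nat.pos_of_neZero n) one_lt_two)
  calc r + 1 = #(range (r + 1)) := (card_range _).symm
    _ ≤ _ := by
      refine card_le_card_of_injOn (fun i : ℕ => (i : ZMod n)) (fun i hi => ?_) ?_
      · simp only [coe_range, Set.mem_Iio] at hi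
        simp [valMinAbs_natCast_of_le_half ((Nat.lt_succ_iff.1 hi).trans hr), Nat.lt_succ_iff.1 hi]
      · intro i hi j hj hij
        simp only [coe_range, Set.mem_Iio] at hi hj
        simpa [val_natCast_of_lt (hi.trans_le hrn), val_natCast_of_lt (hj.trans_le hrn)]
          using congrArg val hij

theorem one_le_card_filter_natAbs_valMinAbs_eq {r : ℕ} (hr : r ≤ n / 2) :
    1 ≤ #{a : ZMod n | a.valMinAbs.natAbs = r} :=
  card_pos.2 ⟨r, by simp [valMinAbs_natCast_of_le_half hr]⟩

theorem two_mul_natAbs_valMinAbs_div_le_sin (a : ZMod n) :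
    2 * a.valMinAbs.natAbs / n ≤ sin (π * a.val / n) := by
  have hn : (0 : ℝ) < n := Nat.cast_pos.2 (Nat.pos_of_neZero n)
  have hhalf : (a.valMinAbs.natAbs : ℝ) ≤ n / 2 := by
    rw [le_div_iff₀ two_pos]
    exact_mod_cast (Nat.le_div_iff_mul_le two_pos).1 (natAbs_valMinAbs_le a)
  have hle : π * a.valMinAbs.natAbs / n ≤ π / 2 :=
    calc π * a.valMinAbs.natAbs / n ≤ π * (n / 2) / n := by gcongr
      _ = π / 2 := by field_simp
  calc (2 * a.valMinAbs.natAbs / n : ℝ) = 2 / π * (π * a.valMinAbs.natAbs / n) := by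
        field_simp
    _ ≤ sin (π * a.val / n) := by
        rw [sin_pi_mul_val_div_eq_sin_natAbs_valMinAbs]
        exact mul_le_sin (by positivity) hle

theorem sin_le_pi_mul_natAbs_valMinAbs_div (a : ZMod n) :
    sin (π * a.val / n) ≤ π * a.valMinAbs.natAbs / n := by
  rw [sin_pi_mul_val_div_eq_sin_natAbs_valMinAbs]
  exact sin_le (by positivity)

end ZMod

section SupLevelSets

variable {ι α : Type*} [Fintype ι] [DecidableEq ι]

theorem card_piFinset_update_const (j : ι) (A E : Finset α) :
    #(Fintype.piFinset (Function.update (fun _ => A) j E)) = #E * #A ^ (Fintype.card ι - 1) := by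
  rw [Fintype.card_piFinset, ← mul_prod_erase univ _ (mem_univ j), Function.update_self]
  congr 1
  rw [prod_congr rfl fun i hi => by rw [Function.update_of_ne (ne_of_mem_erase hi)],
    prod_const, card_erase_of_mem (mem_univ j), card_univ]

variable [Fintype α] (f : α → ℕ) (r : ℕ)

theorem le_card_filter_sup_eq (j : ι) :
    #{a | f a = r} * #{a | f a ≤ r} ^ (Fintype.card ι - 1) ≤
      #{x : ι → α | univ.sup (f ∘ x) = r} := by
  rw [← card_piFinset_update_const j]
  refine card_le_card fun x hx => ?_
  rw [Fintype.mem_piFinset] at hx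
  have hle : ∀ i, f (x i) ≤ r := fun i => by
    specialize hx i
    rcases eq_or_ne i j with rfl | hij
    · simp only [Function.update_self, mem_filter, mem_univ, true_and] at hx
      exact hx.le
    · simpa [Function.update_of_ne hij] using hx
  have hj : f (x j) = r := by simpa using hx j
  simp only [mem_filter, mem_univ, true_and]
  exact le_antisymm (Finset.sup_le fun i _ => hle i) (hj ▸ le_sup (f := f ∘ x) (mem_univ j))

theorem card_filter_sup_eq_le [Nonempty ι] :
    #{x : ι → α | univ.sup (f ∘ x) = r} ≤
      Fintype.card ι * (#{a | f a = r} * #{a | f a ≤ r} ^ (Fintype.card ι - 1)) := by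
  set A : Finset α := {a | f a ≤ r}
  set E : Finset α := {a | f a = r}
  calc #{x : ι → α | univ.sup (f ∘ x) = r}
      ≤ #(univ.biUnion fun j : ι =>
          Fintype.piFinset (Function.update (fun _ => A) j E)) := by
        refine card_le_card fun x hx => ?_
        simp only [mem_filter, mem_univ, true_and] at hx
        obtain ⟨j, -, hj⟩ := exists_mem_eq_sup univ univ_nonempty (f ∘ x)
        refine mem_biUnion.2 ⟨j, mem_univ j, Fintype.mem_piFinset.2 fun i => ?_⟩
        rcases eq_or_ne i j with rfl | hij
        · simpa [E, hx] using hj.symm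
        · simpa [A, Function.update_of_ne hij, ← hx] using le_sup (f := f ∘ x) (mem_univ i)
    _ ≤ ∑ j : ι, #(Fintype.piFinset
          (Function.update (fun _ => A) j E)) := card_biUnion_le
    _ = _ := by simp only [card_piFinset_update_const, sum_const, card_univ, smul_eq_mul]

end SupLevelSets

theorem log_le_two_mul_harmonic_half {n : ℕ} (hn : n ≠ 0) : log n ≤ 2 * harmonic (n / 2) := by
  have hsq : n ≤ (n / 2 + 1) ^ 2 := by nlinarith [Nat.div_add_mod n 2, Nat.mod_lt n two_pos]
  calc log n ≤ log (((n / 2 + 1 : ℕ) : ℝ) ^ 2) :=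
        log_le_log (Nat.cast_pos.2 (Nat.pos_of_ne_zero hn)) (by exact_mod_cast hsq)
    _ = 2 * log ((n / 2 + 1 : ℕ) : ℝ) := by rw [log_pow, Nat.cast_ofNat]
    _ ≤ 2 * harmonic (n / 2) := by gcongr; exact log_add_one_le_harmonic _

theorem harmonic_half_le_three_mul_log {n : ℕ} (hn : 2 ≤ n) : harmonic (n / 2) ≤ 3 * log n := by
  have hlog2 : 1 / 2 < log 2 := lt_trans (by norm_num) log_two_gt_d9
  have hlogn : log 2 ≤ log n := log_le_log two_pos (by exact_mod_cast hn)
  calc (harmonic (n / 2) : ℝ) ≤ 1 + log (n / 2 : ℕ) := harmonic_le_one_add_log _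
    _ ≤ 1 + log n := by
        gcongr
        · exact Nat.cast_pos.2 (by omega)
        · exact Nat.div_le_self n 2
    _ ≤ 3 * log n := by linarith

namespace RWVacant

variable {d n : ℕ}

def supDist (v : Torus d n) : ℕ := univ.sup fun j => (v j).valMinAbs.natAbs

theorem natAbs_valMinAbs_le_supDist (v : Torus d n) (j : Fin d) :
    (v j).valMinAbs.natAbs ≤ supDist v :=
  le_sup (f := fun j => (v j).valMinAbs.natAbs) (mem_univ j)

theorem exists_natAbs_valMinAbs_eq_supDist (hd : d ≠ 0) (v : Torus d n) :
    ∃ j, (v j).valMinAbs.natAbs = supDist v := by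
  have : Nonempty (Fin d) := ⟨⟨0, Nat.pos_of_ne_zero hd⟩⟩
  obtain ⟨j, -, hj⟩ := exists_mem_eq_sup univ univ_nonempty fun j => (v j).valMinAbs.natAbs
  exact ⟨j, hj.symm⟩

theorem supDist_le_half [NeZero n] (v : Torus d n) : supDist v ≤ n / 2 :=
  Finset.sup_le fun j _ => ZMod.natAbs_valMinAbs_le (v j)

theorem supDist_zero : supDist (0 : Torus d n) = 0 := by
  simp [supDist]

theorem one_le_supDist [NeZero n] {v : Torus d n} (hv : v ≠ 0) : 1 ≤ supDist v := by
  obtain ⟨j, hj⟩ := Function.ne_iff.1 hv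
  exact (Nat.one_le_iff_ne_zero.2 (by simpa using hj)).trans (natAbs_valMinAbs_le_supDist v j)

theorem sq_div_le_lam [NeZero n] (hd : d ≠ 0) (v : Torus d n) :
    (2 * supDist v / n) ^ 2 / d ≤ lam d n v := by
  obtain ⟨j, hj⟩ := exists_natAbs_valMinAbs_eq_supDist hd v
  have hsin := ZMod.two_mul_natAbs_valMinAbs_div_le_sin (v j)
  rw [lam, one_div_mul_eq_div, ← hj]
  gcongr
  calc (2 * (v j).valMinAbs.natAbs / n : ℝ) ^ 2 ≤ sin (π * (v j).val / n) ^ 2 :=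
        pow_le_pow_left₀ (by positivity) hsin 2
    _ ≤ ∑ i, sin (π * (v i).val / n) ^ 2 :=
        single_le_sum (f := fun i => sin (π * (v i).val / n) ^ 2) (fun _ _ => sq_nonneg _)
          (mem_univ j)

theorem lam_le_sq [NeZero n] (v : Torus d n) : lam d n v ≤ (π * supDist v / n) ^ 2 := by
  have hterm (j : Fin d) : sin (π * (v j).val / n) ^ 2 ≤ (π * supDist v / n) ^ 2 := by
    have hsin := ZMod.two_mul_natAbs_valMinAbs_div_le_sin (v j)
    refine pow_le_pow_left₀ (le_trans (by positivity) hsin) ?_ 2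
    refine (ZMod.sin_le_pi_mul_natAbs_valMinAbs_div (v j)).trans ?_
    gcongr
    exact_mod_cast natAbs_valMinAbs_le_supDist v j
  rcases eq_or_ne d 0 with rfl | hd
  · simp only [lam, CharP.cast_eq_zero, div_zero, zero_mul]
    positivity
  rw [lam, one_div_mul_eq_div, div_le_iff₀ (by positivity)]
  calc ∑ j, sin (π * (v j).val / n) ^ 2 ≤ ∑ _j : Fin d, (π * supDist v / n) ^ 2 :=
        sum_le_sum fun j _ => hterm j
    _ = _ := by simp [mul_comm]

theorem lam_le_one [NeZero n] (v : Torus d n) : lam d n v ≤ 1 := by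
  rcases eq_or_ne d 0 with rfl | hd
  · simp [lam]
  rw [lam, one_div_mul_eq_div, div_le_one (by positivity)]
  calc ∑ j, sin (π * (v j).val / n) ^ 2 ≤ ∑ _j : Fin d, (1 : ℝ) :=
        sum_le_sum fun j _ => sin_sq_le_one _
    _ = d := by simp

theorem lam_pos [NeZero n] (hd : d ≠ 0) {v : Torus d n} (hv : v ≠ 0) : 0 < lam d n v := by
  have : (0 : ℝ) < supDist v := Nat.cast_pos.2 (one_le_supDist hv)
  have : (0 : ℝ) < d := Nat.cast_pos.2 (Nat.pos_of_ne_zero hd)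
  have : (0 : ℝ) < n := Nat.cast_pos.2 (Nat.pos_of_neZero n)
  exact lt_of_lt_of_le (by positivity) (sq_div_le_lam hd v)

theorem inv_lam_pow_le [NeZero n] (hd : d ≠ 0) {v : Torus d n} (hv : v ≠ 0) (k : ℕ) :
    (lam d n v ^ k)⁻¹ ≤ (d / 4) ^ k * (n / supDist v) ^ (2 * k) := by
  have : (0 : ℝ) < supDist v := Nat.cast_pos.2 (one_le_supDist hv)
  have : (0 : ℝ) < d := Nat.cast_pos.2 (Nat.pos_of_ne_zero hd)
  have : (0 : ℝ) < n := Nat.cast_pos.2 (Nat.pos_of_neZero n)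
  calc (lam d n v ^ k)⁻¹ ≤ (((2 * supDist v / n : ℝ) ^ 2 / d) ^ k)⁻¹ :=
        inv_anti₀ (by positivity) (pow_le_pow_left₀ (by positivity) (sq_div_le_lam hd v) k)
    _ = (d / 4) ^ k * (n / supDist v) ^ (2 * k) := by
        rw [pow_mul, ← inv_pow, ← mul_pow]
        congr 1
        field_simp
        ring

theorem le_inv_lam_pow [NeZero n] (hd : d ≠ 0) {v : Torus d n} (hv : v ≠ 0) (k : ℕ) :
    (n / (π * supDist v)) ^ (2 * k) ≤ (lam d n v ^ k)⁻¹ := by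
  have hlam := lam_pos hd hv
  calc (n / (π * supDist v)) ^ (2 * k) = (((π * supDist v / n) ^ 2) ^ k)⁻¹ := by
        rw [pow_mul, ← inv_pow, ← inv_pow, inv_div]
    _ ≤ (lam d n v ^ k)⁻¹ :=
        inv_anti₀ (pow_pos hlam k) (pow_le_pow_left₀ hlam.le (lam_le_sq v) k)

theorem card_supDist_eq_le [NeZero n] (hd : d ≠ 0) {r : ℕ} (hr : 1 ≤ r) :
    #{v : Torus d n | supDist v = r} ≤ 2 * d * 3 ^ (d - 1) * r ^ (d - 1) := by
  have : Nonempty (Fin d) := ⟨⟨0, Nat.pos_of_ne_zero hd⟩⟩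
  have h := card_filter_sup_eq_le (ι := Fin d) (fun a : ZMod n => a.valMinAbs.natAbs) r
  rw [Fintype.card_fin] at h
  refine h.trans ?_
  calc d * (#{a : ZMod n | a.valMinAbs.natAbs = r} *
        #{a : ZMod n | a.valMinAbs.natAbs ≤ r} ^ (d - 1)) ≤ d * (2 * (3 * r) ^ (d - 1)) := by
        gcongr
        · exact ZMod.card_filter_natAbs_valMinAbs_eq_le_two r
        · exact (ZMod.card_filter_natAbs_valMinAbs_le r).trans (by omega)
    _ = 2 * d * 3 ^ (d - 1) * r ^ (d - 1) := by
        rw [mul_pow]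
        ring

theorem le_card_supDist_eq [NeZero n] (hd : d ≠ 0) {r : ℕ} (hr : r ≤ n / 2) :
    r ^ (d - 1) ≤ #{v : Torus d n | supDist v = r} := by
  have h := le_card_filter_sup_eq (fun a : ZMod n => a.valMinAbs.natAbs) r
    (⟨0, Nat.pos_of_ne_zero hd⟩ : Fin d)
  rw [Fintype.card_fin] at h
  refine le_trans ?_ h
  calc r ^ (d - 1) ≤ 1 * (r + 1) ^ (d - 1) := by
        rw [one_mul]
        gcongr
        omega
    _ ≤ _ := by
        gcongr
        · exact ZMod.one_le_card_filter_natAbs_valMinAbs_eq hr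
        · exact ZMod.le_card_filter_natAbs_valMinAbs_le hr

theorem sum_erase_zero_comp_supDist [NeZero n] (F : ℕ → ℝ) :
    ∑ v ∈ univ.erase (0 : Torus d n), F (supDist v) =
      ∑ r ∈ Icc 1 (n / 2), (#{v : Torus d n | supDist v = r} : ℝ) * F r := by
  rw [← sum_fiberwise_of_maps_to (g := supDist) (t := Icc 1 (n / 2))
    fun v hv => mem_Icc.2 ⟨one_le_supDist (ne_of_mem_erase hv), supDist_le_half v⟩]
  refine sum_congr rfl fun r hr => ?_
  rw [sum_congr rfl fun v hv => by rw [(mem_filter.1 hv).2], sum_const, nsmul_eq_mul]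
  congr 3
  ext v
  simp only [mem_filter, mem_erase, mem_univ, and_true, true_and]
  refine and_iff_right_of_imp fun h hv => ?_
  rw [hv, supDist_zero] at h
  exact absurd (mem_Icc.1 hr).1 (by omega)

def shellSum (d k m : ℕ) : ℝ := ∑ r ∈ Icc 1 m, (r : ℝ) ^ (d - 1) / r ^ (2 * k)

theorem sum_inv_lam_pow_le [NeZero n] (hd : d ≠ 0) (k : ℕ) :
    ∑ v ∈ univ.erase (0 : Torus d n), (lam d n v ^ k)⁻¹ ≤
      (d / 4) ^ k * (2 * d * 3 ^ (d - 1)) * n ^ (2 * k) * shellSum d k (n / 2) := by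
  calc ∑ v ∈ univ.erase (0 : Torus d n), (lam d n v ^ k)⁻¹
      ≤ ∑ v ∈ univ.erase (0 : Torus d n), (d / 4 : ℝ) ^ k * (n / supDist v) ^ (2 * k) :=
        sum_le_sum fun v hv => inv_lam_pow_le hd (ne_of_mem_erase hv) k
    _ = ∑ r ∈ Icc 1 (n / 2),
          (#{v : Torus d n | supDist v = r} : ℝ) * ((d / 4) ^ k * (n / r) ^ (2 * k)) :=
        sum_erase_zero_comp_supDist fun r => (d / 4 : ℝ) ^ k * (n / r) ^ (2 * k)
    _ ≤ ∑ r ∈ Icc 1 (n / 2),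
          ((2 * d * 3 ^ (d - 1) * r ^ (d - 1) : ℕ) : ℝ) * ((d / 4) ^ k * (n / r) ^ (2 * k)) := by
        gcongr with r hr
        exact card_supDist_eq_le hd (mem_Icc.1 hr).1
    _ = _ := by
        rw [shellSum, mul_sum]
        refine sum_congr rfl fun r _ => ?_
        push_cast
        ring

theorem le_sum_inv_lam_pow [NeZero n] (hd : d ≠ 0) (k : ℕ) :
    n ^ (2 * k) / π ^ (2 * k) * shellSum d k (n / 2) ≤
      ∑ v ∈ univ.erase (0 : Torus d n), (lam d n v ^ k)⁻¹ := by
  calc n ^ (2 * k) / π ^ (2 * k) * shellSum d k (n / 2)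
      = ∑ r ∈ Icc 1 (n / 2), ((r ^ (d - 1) : ℕ) : ℝ) * (n / (π * r)) ^ (2 * k) := by
        rw [shellSum, mul_sum]
        refine sum_congr rfl fun r _ => ?_
        push_cast
        ring
    _ ≤ ∑ r ∈ Icc 1 (n / 2), (#{v : Torus d n | supDist v = r} : ℝ) * (n / (π * r)) ^ (2 * k) := by
        gcongr with r hr
        exact le_card_supDist_eq hd (mem_Icc.1 hr).2
    _ = ∑ v ∈ univ.erase (0 : Torus d n), (n / (π * supDist v)) ^ (2 * k) :=
        (sum_erase_zero_comp_supDist _).symm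
    _ ≤ _ := sum_le_sum fun v hv => le_inv_lam_pow hd (ne_of_mem_erase hv) k

theorem pow_sub_one_le_sum_inv_lam_pow [NeZero n] (hd : d ≠ 0) (k : ℕ) :
    (n : ℝ) ^ d - 1 ≤ ∑ v ∈ univ.erase (0 : Torus d n), (lam d n v ^ k)⁻¹ := by
  calc (n : ℝ) ^ d - 1 = ∑ _v ∈ univ.erase (0 : Torus d n), (1 : ℝ) := by
        rw [sum_const, card_erase_of_mem (mem_univ 0), card_univ, Fintype.card_fun, ZMod.card,
          Fintype.card_fin, nsmul_one, Nat.cast_sub (Nat.one_le_pow _ _ (Nat.pos_of_neZero n))]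
        push_cast
        rfl
    _ ≤ _ := sum_le_sum fun v hv => by
        have hlam := lam_pos hd (ne_of_mem_erase hv)
        exact (one_le_inv₀ (pow_pos hlam k)).2 (pow_le_one₀ hlam.le (lam_le_one v))

theorem shellSum_le_of_lt {k : ℕ} (h : 2 * k < d) (m : ℕ) :
    shellSum d k m ≤ (m : ℝ) ^ (d - 2 * k) := by
  calc shellSum d k m ≤ ∑ _r ∈ Icc 1 m, (m : ℝ) ^ (d - 1 - 2 * k) := sum_le_sum fun r hr => by
        obtain ⟨hr1, hrm⟩ := mem_Icc.1 hr
        have hr0 : (r : ℝ) ≠ 0 := Nat.cast_ne_zero.2 (by omega)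
        rw [div_le_iff₀ (by positivity), ← pow_sub_mul_pow _ (by omega : 2 * k ≤ d - 1)]
        gcongr
    _ = (m : ℝ) ^ (d - 2 * k) := by
        rw [sum_const, Nat.card_Icc, Nat.add_sub_cancel, nsmul_eq_mul, ← pow_succ']
        congr 1
        omega

theorem shellSum_eq_harmonic {k : ℕ} (hd : d ≠ 0) (h : d = 2 * k) (m : ℕ) :
    shellSum d k m = harmonic m := by
  rw [shellSum, harmonic_eq_sum_Icc, ← h]
  push_cast
  refine sum_congr rfl fun r hr => ?_
  have hr : (r : ℝ) ≠ 0 := Nat.cast_ne_zero.2 (by have := (mem_Icc.1 hr).1; omega)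
  rw [div_eq_iff (pow_ne_zero _ hr), ← pow_sub_one_mul hd]
  field_simp

theorem one_le_shellSum {k m : ℕ} (hm : 1 ≤ m) : 1 ≤ shellSum d k m := by
  unfold shellSum
  simpa using single_le_sum (f := fun r : ℕ => (r : ℝ) ^ (d - 1) / r ^ (2 * k))
    (fun r _ => by positivity) (mem_Icc.2 ⟨le_rfl, hm⟩)

theorem shellSum_le_pi_sq_div_six {k : ℕ} (h : d < 2 * k) (m : ℕ) : shellSum d k m ≤ π ^ 2 / 6 := by
  calc shellSum d k m ≤ ∑ r ∈ range (m + 1), 1 / (r : ℝ) ^ 2 := by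
        refine sum_le_sum_of_subset_of_nonneg (fun r hr => ?_) (fun _ _ _ => by positivity)
          |>.trans' (sum_le_sum fun r hr => ?_)
        · exact mem_range.2 (Nat.lt_succ_of_le (mem_Icc.1 hr).2)
        · have hr1 : (1 : ℝ) ≤ r := Nat.one_le_cast.2 (mem_Icc.1 hr).1
          rw [div_le_div_iff₀ (by positivity) (by positivity), one_mul, ← pow_add]
          exact pow_le_pow_right₀ hr1 (by omega)
    _ ≤ π ^ 2 / 6 := sum_le_hasSum _ (fun _ _ => by positivity) hasSum_zeta_two

def meanInvLamPow (d k n : ℕ) [NeZero n] : ℝ :=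
  ((n : ℝ) ^ d)⁻¹ * ∑ v ∈ univ.erase (0 : Torus d n), (lam d n v ^ k)⁻¹

def growthRate (d k n : ℕ) : ℝ :=
  if 2 * k < d then 1 else if d = 2 * k then log n else (n : ℝ) ^ (2 * k - d)

theorem growthRate_nonneg (d k : ℕ) (hn : 1 ≤ n) : 0 ≤ growthRate d k n := by
  unfold growthRate
  split_ifs
  · exact zero_le_one
  · exact log_nonneg (Nat.one_le_cast.2 hn)
  · positivity

theorem meanInvLamPow_le [NeZero n] (hd : d ≠ 0) (k : ℕ) :
    meanInvLamPow d k n ≤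
      (d / 4) ^ k * (2 * d * 3 ^ (d - 1)) * (n ^ (2 * k) / n ^ d * shellSum d k (n / 2)) := by
  have : (0 : ℝ) < n := Nat.cast_pos.2 (Nat.pos_of_neZero n)
  rw [meanInvLamPow, inv_mul_le_iff₀ (by positivity)]
  refine (sum_inv_lam_pow_le hd k).trans_eq ?_
  field_simp

theorem le_meanInvLamPow [NeZero n] (hd : d ≠ 0) (k : ℕ) :
    (π ^ (2 * k))⁻¹ * (n ^ (2 * k) / n ^ d * shellSum d k (n / 2)) ≤ meanInvLamPow d k n := by
  have : (0 : ℝ) < n := Nat.cast_pos.2 (Nat.pos_of_neZero n)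
  rw [meanInvLamPow, le_inv_mul_iff₀ (by positivity)]
  refine le_trans (le_of_eq ?_) (le_sum_inv_lam_pow hd k)
  field_simp

theorem meanInvLamPow_bounds_of_lt [NeZero n] (hd : d ≠ 0) {k : ℕ} (h : 2 * k < d)
    (hn : 2 ≤ n) :
    1 / 2 * growthRate d k n ≤ meanInvLamPow d k n ∧
      meanInvLamPow d k n ≤ (d / 4) ^ k * (2 * d * 3 ^ (d - 1)) * growthRate d k n := by
  rw [growthRate, if_pos h, mul_one, mul_one]
  have hnd : (2 : ℝ) ≤ n ^ d := by exact_mod_cast hn.trans (Nat.le_self_pow hd n)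
  constructor
  · rw [meanInvLamPow, le_inv_mul_iff₀ (by positivity)]
    linarith [pow_sub_one_le_sum_inv_lam_pow (n := n) hd k]
  · refine (meanInvLamPow_le hd k).trans (mul_le_of_le_one_right (by positivity) ?_)
    calc (n : ℝ) ^ (2 * k) / n ^ d * shellSum d k (n / 2)
        ≤ n ^ (2 * k) / n ^ d * n ^ (d - 2 * k) := by
          gcongr
          exact (shellSum_le_of_lt h _).trans
            (pow_le_pow_left₀ (by positivity) (Nat.cast_le.2 (Nat.div_le_self n 2)) _)
      _ = 1 := by
          rw [div_mul_eq_mul_div, ← pow_add, Nat.add_sub_cancel' h.le, div_self (by positivity)]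

theorem meanInvLamPow_bounds_of_eq [NeZero n] (hd : d ≠ 0) {k : ℕ} (h : d = 2 * k)
    (hn : 2 ≤ n) :
    (2 * π ^ (2 * k))⁻¹ * growthRate d k n ≤ meanInvLamPow d k n ∧
      meanInvLamPow d k n ≤ (d / 4) ^ k * (2 * d * 3 ^ (d - 1)) * 3 * growthRate d k n := by
  have hratio : (n : ℝ) ^ (2 * k) / n ^ d * shellSum d k (n / 2) = harmonic (n / 2) := by
    rw [shellSum_eq_harmonic hd h, ← h, div_self (by positivity), one_mul]
  rw [growthRate, if_neg (by omega), if_pos h]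
  constructor
  · refine le_trans ?_ (le_meanInvLamPow hd k)
    rw [hratio, mul_inv, mul_comm (2 : ℝ)⁻¹, mul_assoc]
    gcongr
    linarith [log_le_two_mul_harmonic_half (n := n) (by omega)]
  · refine (meanInvLamPow_le hd k).trans ?_
    rw [hratio, mul_assoc _ 3]
    gcongr
    exact harmonic_half_le_three_mul_log hn

theorem meanInvLamPow_bounds_of_gt [NeZero n] (hd : d ≠ 0) {k : ℕ} (h : d < 2 * k)
    (hn : 2 ≤ n) :
    (π ^ (2 * k))⁻¹ * growthRate d k n ≤ meanInvLamPow d k n ∧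
      meanInvLamPow d k n ≤
        (d / 4) ^ k * (2 * d * 3 ^ (d - 1)) * (π ^ 2 / 6) * growthRate d k n := by
  have hratio : (n : ℝ) ^ (2 * k) / n ^ d = n ^ (2 * k - d) := by
    rw [div_eq_iff (by positivity), ← pow_add, Nat.sub_add_cancel h.le]
  rw [growthRate, if_neg (by omega), if_neg (by omega)]
  constructor
  · refine le_trans ?_ (le_meanInvLamPow hd k)
    rw [hratio]
    gcongr
    exact le_mul_of_one_le_right (by positivity) (one_le_shellSum (by omega))
  · refine (meanInvLamPow_le hd k).trans ?_
    rw [hratio, mul_assoc _ (π ^ 2 / 6), mul_comm (π ^ 2 / 6)]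
    gcongr
    exact shellSum_le_pi_sq_div_six h _

theorem exists_bounds_meanInvLamPow (hd : d ≠ 0) (k : ℕ) :
    ∃ c C : ℝ, 0 < c ∧ 0 < C ∧ ∀ (n : ℕ) [NeZero n], 2 ≤ n →
      c * growthRate d k n ≤ meanInvLamPow d k n ∧
        meanInvLamPow d k n ≤ C * growthRate d k n := by
  have : (0 : ℝ) < d := Nat.cast_pos.2 (Nat.pos_of_ne_zero hd)
  rcases lt_trichotomy (2 * k) d with h | h | h
  · exact ⟨_, _, by norm_num, by positivity, fun n _ hn => meanInvLamPow_bounds_of_lt hd h hn⟩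
  · exact ⟨_, _, by positivity, by positivity,
      fun n _ hn => meanInvLamPow_bounds_of_eq hd h.symm hn⟩
  · exact ⟨_, _, by positivity, by positivity, fun n _ hn => meanInvLamPow_bounds_of_gt hd h hn⟩

end RWVacant

theorem stmt5_general (d k : ℕ) (hd : 1 ≤ d) :
    ∃ c C : ℝ, 0 < c ∧ c ≤ C ∧
      ∀ (n : ℕ) [NeZero n], 2 ≤ n →
        c * (if 2 * k < d then (1 : ℝ) else if d = 2 * k then Real.log (n : ℝ)
              else (n : ℝ) ^ (2 * k - d)) ≤
            ((n : ℝ) ^ d)⁻¹ *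
              ∑ v ∈ (Finset.univ : Finset (Torus d n)).erase 0, (lam d n v ^ k)⁻¹ ∧
          ((n : ℝ) ^ d)⁻¹ *
              ∑ v ∈ (Finset.univ : Finset (Torus d n)).erase 0, (lam d n v ^ k)⁻¹ ≤
            C * (if 2 * k < d then (1 : ℝ) else if d = 2 * k then Real.log (n : ℝ)
              else (n : ℝ) ^ (2 * k - d)) := by
  obtain ⟨c, C, hc, hC, hbounds⟩ := exists_bounds_meanInvLamPow (by omega : d ≠ 0) k
  refine ⟨min c C, max c C, lt_min hc hC, min_le_max, fun n _ hn => ?_⟩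
  have hrate := growthRate_nonneg d k (by omega : 1 ≤ n)
  obtain ⟨hlow, hup⟩ := hbounds n hn
  exact ⟨(mul_le_mul_of_nonneg_right (min_le_left c C) hrate).trans hlow,
    hup.trans (mul_le_mul_of_nonneg_right (le_max_right c C) hrate)⟩

/-- Growth rate of `n^{-d} Σ_{v ≠ 0} λ_v^{-k}` (Lemma 2.1, first part). -/
theorem stmt5 (d k : ℕ) (hd : 1 ≤ d) (hk : 1 ≤ k) :
    ∃ c C : ℝ, 0 < c ∧ c ≤ C ∧
      ∀ (n : ℕ) [NeZero n], 2 ≤ n →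
        c * (if 2 * k < d then (1 : ℝ) else if d = 2 * k then Real.log (n : ℝ)
              else (n : ℝ) ^ (2 * k - d)) ≤
            ((n : ℝ) ^ d)⁻¹ *
              ∑ v ∈ (Finset.univ : Finset (Torus d n)).erase 0, (lam d n v ^ k)⁻¹ ∧
          ((n : ℝ) ^ d)⁻¹ *
              ∑ v ∈ (Finset.univ : Finset (Torus d n)).erase 0, (lam d n v ^ k)⁻¹ ≤
            C * (if 2 * k < d then (1 : ℝ) else if d = 2 * k then Real.log (n : ℝ)
              else (n : ℝ) ^ (2 * k - d)) :=
  stmt5_general d k hd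
end
end

section
/- Fix an integer k ≥ 1, positive reals α_0, α_1, …, α_k, and reals 1 = ζ_0 < ζ_1 < ⋯ < ζ_k. Let f(z) := Σ_{i=1}^k α_i/(ζ_i − z) (for z ∉ {ζ_1,…,ζ_k}) and let P_k(z) := Σ_{i=0}^k α_i ∏_{0≤j≤k, j≠i} (ζ_j − z). Then the degree-k polynomial P_k has exactly k roots, all real and distinct, say γ_1 < γ_2 < ⋯ < γ_k, and they interlace: 1 < γ_1 < ζ_1 < γ_2 < ζ_2 < ⋯ < γ_k < ζ_k. Moreover, if γ := 1 + α_0/f(1) satisfies γ < ζ_1, then 1 + α_0/f(γ) ≤ γ_1 ≤ 1 + α_0/f(1). -/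
open scoped BigOperators Classical
open Filter

noncomputable section

open RWVacant

/- At the nodes `P_k(ζᵢ) = αᵢ ∏_{j ≠ i} (ζⱼ - ζᵢ)` has sign `(-1)ⁱ`, so the
intermediate value theorem gives a root in each of the `k` gaps `(ζᵢ₋₁, ζᵢ)`; as `deg P_k = k`,
these are all the complex roots. Off the nodes `P_k(z) = ∏ⱼ (ζⱼ - z) · ∑ᵢ αᵢ / (ζᵢ - z)`, so the
first root `γ₁ ∈ (1, ζ₁)` is a fixed point of `φ(z) = 1 + α₀ / f(z)`, and `φ` is antitone on
`(-∞, ζ₁)` because `f` is positive and increasing there. Hence `γ₁ ≤ φ(1)`, and applying `φ`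
once more, `φ(φ(1)) ≤ γ₁`. -/

section Secular

open Polynomial Finset

theorem prod_C_sub_X_eq_C_mul_nodal {ι R : Type*} [CommRing R] (s : Finset ι) (v : ι → R) :
    ∏ j ∈ s, (C (v j) - X) = C ((-1) ^ #s) * Lagrange.nodal s v := by
  rw [Lagrange.nodal_eq, map_pow, map_neg, map_one, ← Finset.prod_neg]
  simp

variable {ι : Type*} [Fintype ι] [DecidableEq ι]

/-- `∑ᵢ αᵢ ∏_{j ≠ i} (ζⱼ - z)`: the numerator of `∑ᵢ αᵢ / (ζᵢ - z)` over the common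
denominator `∏ⱼ (ζⱼ - z)`. -/
def secularPoly {R : Type*} [CommRing R] (α ζ : ι → R) : R[X] :=
  ∑ i, C (α i) * ∏ j ∈ univ.erase i, (C (ζ j) - X)

theorem degree_secularPoly {R : Type*} [CommRing R] [IsDomain R] {n : ℕ}
    (hcard : Fintype.card ι = n + 1) (α ζ : ι → R) (hα : ∑ i, α i ≠ 0) :
    (secularPoly α ζ).degree = n := by
  have hcard_erase (i : ι) : #(univ.erase i) = n := by
    rw [card_erase_of_mem (mem_univ i), card_univ, hcard, Nat.add_sub_cancel]
  have hterm (i : ι) : C (α i) * ∏ j ∈ univ.erase i, (C (ζ j) - X) =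
      C (α i * (-1) ^ n) * Lagrange.nodal (univ.erase i) ζ := by
    rw [prod_C_sub_X_eq_C_mul_nodal, hcard_erase, ← mul_assoc, ← C_mul]
  have hle : (secularPoly α ζ).degree ≤ n := by
    refine (degree_sum_le _ _).trans (Finset.sup_le fun i _ => ?_)
    rw [hterm]
    refine degree_le_of_natDegree_le ((natDegree_C_mul_le _ _).trans ?_)
    rw [Lagrange.natDegree_nodal, hcard_erase]
  have hcoeff : (secularPoly α ζ).coeff n = (∑ i, α i) * (-1) ^ n := by
    simp only [secularPoly, hterm, finsetSum_coeff, coeff_C_mul, sum_mul]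
    refine sum_congr rfl fun i _ => ?_
    have hlead := (Lagrange.nodal_monic (s := univ.erase i) (v := ζ)).coeff_natDegree
    rw [Lagrange.natDegree_nodal, hcard_erase] at hlead
    rw [hlead, mul_one]
  exact degree_eq_of_le_of_coeff_ne_zero hle (by simp [hcoeff, hα])

theorem eval_secularPoly {R : Type*} [CommRing R] (α ζ : ι → R) (x : R) :
    (secularPoly α ζ).eval x = ∑ i, α i * ∏ j ∈ univ.erase i, (ζ j - x) := by
  simp [secularPoly, eval_finsetSum, eval_prod]

theorem eval_secularPoly_node {R : Type*} [CommRing R] (α ζ : ι → R) (i : ι) :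
    (secularPoly α ζ).eval (ζ i) = α i * ∏ j ∈ univ.erase i, (ζ j - ζ i) := by
  rw [eval_secularPoly]
  refine sum_eq_single i (fun i' _ hi' => ?_) (by simp)
  rw [prod_eq_zero (mem_erase.mpr ⟨hi'.symm, mem_univ i⟩) (sub_self _), mul_zero]

theorem eval_secularPoly_eq_prod_mul_sum {K : Type*} [Field K] (α ζ : ι → K) {x : K}
    (hx : ∀ j, ζ j ≠ x) :
    (secularPoly α ζ).eval x = (∏ j, (ζ j - x)) * ∑ i, α i / (ζ i - x) := by
  rw [eval_secularPoly, mul_sum]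
  refine sum_congr rfl fun i _ => ?_
  have hi : ζ i - x ≠ 0 := sub_ne_zero.mpr (hx i)
  rw [← mul_prod_erase univ _ (mem_univ i)]
  field_simp

theorem sum_div_sub_eq_zero_of_isRoot {K : Type*} [Field K] {α ζ : ι → K} {x : K}
    (hroot : (secularPoly α ζ).IsRoot x) (hx : ∀ j, ζ j ≠ x) :
    ∑ i, α i / (ζ i - x) = 0 := by
  have hprod : ∏ j, (ζ j - x) ≠ 0 := prod_ne_zero_iff.mpr fun j _ => sub_ne_zero.mpr (hx j)
  rw [IsRoot, eval_secularPoly_eq_prod_mul_sum α ζ hx] at hroot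
  exact (mul_eq_zero.mp hroot).resolve_left hprod

end Secular

theorem Polynomial.roots_eq_map_univ_of_isRoot {ι R : Type*} [Fintype ι] [CommRing R]
    [IsDomain R] {p : Polynomial R} (hp : p ≠ 0) {γ : ι → R} (hγ : Function.Injective γ)
    (hroot : ∀ i, p.IsRoot (γ i)) (hdeg : p.natDegree ≤ Fintype.card ι) :
    p.roots = Finset.univ.val.map γ := by
  have hle : Finset.univ.val.map γ ≤ p.roots := by
    refine (Multiset.le_iff_subset (Finset.univ.nodup.map hγ)).2 fun a ha => ?_
    obtain ⟨i, -, rfl⟩ := Multiset.mem_map.1 ha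
    exact (mem_roots hp).2 (hroot i)
  refine (Multiset.eq_of_le_of_card_le hle ?_).symm
  simpa using (card_roots' p).trans hdeg

theorem strictMono_of_mem_Ioo_castSucc_succ {β : Type*} [Preorder β] {k : ℕ}
    {ζ : Fin (k + 1) → β} (hζ : Monotone ζ) {γ : Fin k → β}
    (hγ : ∀ i, γ i ∈ Set.Ioo (ζ i.castSucc) (ζ i.succ)) : StrictMono γ :=
  fun a b hab => ((hγ a).2.trans_le (hζ (Fin.succ_le_castSucc_iff.2 hab))).trans (hγ b).1

theorem AntitoneOn.isFixedPt_mem_Icc {β : Type*} [Preorder β] {φ : β → β} {s : Set β}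
    (hφ : AntitoneOn φ s) {x a : β} (hx : x ∈ s) (hfix : φ x = x) (ha : a ∈ s) (hφa : φ a ∈ s)
    (hax : a ≤ x) : x ∈ Set.Icc (φ (φ a)) (φ a) := by
  have hxa : x ≤ φ a := hfix ▸ hφ ha hx hax
  exact ⟨hfix ▸ hφ hx hφa hxa, hxa⟩

theorem antitoneOn_one_add_div_sum_div_sub {ι : Type*} {s : Finset ι} (hs : s.Nonempty)
    {c ζ : ι → ℝ} (hc : ∀ i ∈ s, 0 < c i) {a b : ℝ} (ha : 0 ≤ a) (hb : ∀ i ∈ s, b ≤ ζ i) :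
    AntitoneOn (fun z => 1 + a / ∑ i ∈ s, c i / (ζ i - z)) (Set.Iio b) := by
  intro x hx y hy hxy
  have hpos : 0 < ∑ i ∈ s, c i / (ζ i - x) :=
    Finset.sum_pos (fun i hi => div_pos (hc i hi) (sub_pos.2 (hx.trans_le (hb i hi)))) hs
  have hmono : ∑ i ∈ s, c i / (ζ i - x) ≤ ∑ i ∈ s, c i / (ζ i - y) :=
    Finset.sum_le_sum fun i hi => div_le_div_of_nonneg_left (hc i hi).le
      (sub_pos.2 (hy.trans_le (hb i hi))) (by linarith)
  dsimp only
  gcongr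

section Interlacing

open Finset

theorem neg_one_pow_mul_prod_erase_sub_pos {n : ℕ} {ζ : Fin n → ℝ} (hζ : StrictMono ζ)
    (i : Fin n) : 0 < (-1) ^ (i : ℕ) * ∏ j ∈ univ.erase i, (ζ j - ζ i) := by
  have hbelow : (univ.erase i).filter (· < i) = Iio i := by
    ext j
    simpa using ne_of_lt
  have hsign : ∏ j ∈ Iio i, (ζ j - ζ i) = (-1) ^ (i : ℕ) * ∏ j ∈ Iio i, (ζ i - ζ j) := by
    rw [← Fin.card_Iio i, ← prod_neg]
    simp
  rw [← prod_filter_mul_prod_filter_not (univ.erase i) (· < i), hbelow, hsign, ← mul_assoc,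
    ← mul_assoc, ← pow_add, Even.neg_one_pow ⟨_, rfl⟩, one_mul]
  refine mul_pos (prod_pos fun j hj => sub_pos.2 (hζ (mem_Iio.1 hj))) (prod_pos fun j hj => ?_)
  simp only [mem_filter, mem_erase, mem_univ, not_lt] at hj
  exact sub_pos.2 (hζ (lt_of_le_of_ne hj.2 (Ne.symm hj.1.1)))

theorem exists_isRoot_secularPoly_mem_Ioo {k : ℕ} {α ζ : Fin (k + 1) → ℝ} (hα : ∀ i, 0 < α i)
    (hζ : StrictMono ζ) (i : Fin k) :
    ∃ x ∈ Set.Ioo (ζ i.castSucc) (ζ i.succ), (secularPoly α ζ).IsRoot x := by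
  set f : ℝ → ℝ := fun x => (-1) ^ (i : ℕ) * (secularPoly α ζ).eval x
  have hleft : 0 < f (ζ i.castSucc) := by
    have := mul_pos (hα i.castSucc) (neg_one_pow_mul_prod_erase_sub_pos hζ i.castSucc)
    simp only [f, eval_secularPoly_node, Fin.val_castSucc] at this ⊢
    linarith
  have hright : f (ζ i.succ) < 0 := by
    have := mul_pos (hα i.succ) (neg_one_pow_mul_prod_erase_sub_pos hζ i.succ)
    simp only [f, eval_secularPoly_node, Fin.val_succ, pow_succ] at this ⊢
    linarith
  obtain ⟨x, hx, hfx⟩ := intermediate_value_Ioo' (hζ Fin.castSucc_lt_succ).le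
    (by fun_prop : Continuous f).continuousOn ⟨hright, hleft⟩
  exact ⟨x, hx, by simpa [f] using hfx⟩

theorem one_add_div_eq_of_isRoot_secularPoly {k : ℕ} {α ζ : Fin (k + 1) → ℝ} (hα0 : α 0 ≠ 0)
    (hζ0 : ζ 0 = 1) {x : ℝ} (hroot : (secularPoly α ζ).IsRoot x) (hx : ∀ j, ζ j ≠ x) :
    1 + α 0 / ∑ i : Fin k, α i.succ / (ζ i.succ - x) = x := by
  have hsum := sum_div_sub_eq_zero_of_isRoot hroot hx
  rw [Fin.sum_univ_succ, hζ0] at hsum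
  have hx1 : 1 - x ≠ 0 := sub_ne_zero.2 (hζ0 ▸ hx 0)
  rw [eq_neg_of_add_eq_zero_right hsum]
  field_simp
  ring

end Interlacing

/-- Interlacing of the roots of `P_k` (Lemma 3.1). -/
theorem stmt11 (k : ℕ) (hk : 1 ≤ k) (α ζ : Fin (k + 1) → ℝ)
    (hα : ∀ i, 0 < α i) (hζ0 : ζ 0 = 1) (hζ : StrictMono ζ) :
    let F : ℝ → ℝ := fun z => ∑ i : Fin k, α i.succ / (ζ i.succ - z)
    let Pk : Polynomial ℝ := ∑ i : Fin (k + 1), Polynomial.C (α i) *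
      ∏ j ∈ Finset.univ.erase i, (Polynomial.C (ζ j) - Polynomial.X)
    Pk.degree = (k : WithBot ℕ) ∧
    ∃ γ : Fin k → ℝ, StrictMono γ ∧
      (∀ i : Fin k, ζ i.castSucc < γ i ∧ γ i < ζ i.succ) ∧
      (Pk.map (algebraMap ℝ ℂ)).roots =
        Finset.univ.val.map (fun i : Fin k => ((γ i : ℝ) : ℂ)) ∧
      (1 + α 0 / F 1 < ζ ⟨1, by omega⟩ →
        1 + α 0 / F (1 + α 0 / F 1) ≤ γ ⟨0, by omega⟩ ∧
          γ ⟨0, by omega⟩ ≤ 1 + α 0 / F 1) := by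
  intro F Pk
  have hdeg : Pk.degree = k := degree_secularPoly (Fintype.card_fin _) α ζ
    (Finset.sum_pos (fun i _ => hα i) Finset.univ_nonempty).ne'
  choose γ hγ hγroot using exists_isRoot_secularPoly_mem_Ioo hα hζ
  have hγmono := strictMono_of_mem_Ioo_castSucc_succ hζ.monotone hγ
  refine ⟨hdeg, γ, hγmono, hγ, ?_, fun hφ1 => ?_⟩
  · have hPk : Pk ≠ 0 := Polynomial.ne_zero_of_degree_gt (n := 0) (by rw [hdeg]; exact_mod_cast hk)
    refine Polynomial.roots_eq_map_univ_of_isRoot (Polynomial.map_ne_zero hPk)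
      (Complex.ofReal_injective.comp hγmono.injective) (fun i => (hγroot i).map) ?_
    rw [Polynomial.natDegree_map, Polynomial.natDegree_eq_of_degree_eq_some hdeg,
      Fintype.card_fin]
  · have hζ1 (i : Fin k) : ζ ⟨1, by omega⟩ ≤ ζ i.succ := hζ.monotone (by simp [Fin.le_def])
    have hγ0 : 1 < γ ⟨0, hk⟩ ∧ γ ⟨0, hk⟩ < ζ ⟨1, by omega⟩ := hζ0 ▸ hγ ⟨0, hk⟩
    have hnode : ∀ j, ζ j ≠ γ ⟨0, hk⟩ :=
      Fin.cases (hζ0 ▸ hγ0.1.ne) fun j => (hγ0.2.trans_le (hζ1 j)).ne'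
    have hφ := antitoneOn_one_add_div_sum_div_sub (s := Finset.univ) ⟨⟨0, hk⟩, Finset.mem_univ _⟩
      (fun i _ => hα i.succ) (hα 0).le (fun i _ => hζ1 i)
    exact hφ.isFixedPt_mem_Icc hγ0.2 (one_add_div_eq_of_isRoot_secularPoly (hα 0).ne' hζ0
      (hγroot ⟨0, hk⟩) hnode) (hζ0 ▸ hζ (by simp [Fin.lt_def])) hφ1 hγ0.1.le
end
end
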